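/- The reproducing kernel of 𝐀^{(λⱼ)}(𝔻) satisfies 𝐁^{(λⱼ)}(z,ω)_{p,ℓ} = binom(ℓ,j)·binom(p,j)·(2λⱼ)_{ℓ−j}^{-1}·(2λⱼ)_{p−j}^{-1}·∂^{p−j}∂̄^{ℓ−j}(1−zω̄)^{−2λⱼ} for ℓ,p ≥ j and 0 otherwise; in particular 𝐁^{(λⱼ)}(0,0) is diagonal with (ℓ,ℓ) entry equal to binom(ℓ,j)²·(ℓ−j)!/(2λⱼ)_{ℓ−j} for ℓ ≥ j and 0 for ℓ < j. -/

import Mathlib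

/-!
Write `μ = 2λ - m + 2j`, `a = ℓ - j`, `b = p - j`. Differentiating the binomial series
`(1 - u w)^(-μ) = ∑ (μ)_N / N! (u w)^N` termwise gives
`∂_u^b ∂_w^a (1 - u w)^(-μ) = ∑ (μ)_N / N! · N^(b) u^(N-b) · N^(a) w^(N-a)`
(falling factorials). The product of the components of `eⁿⱼ` is the `N`-th term of this series
times `C(ℓ,j) C(p,j) / ((μ)_a (μ)_b)`: the square roots multiply to `N! (μ)_N`, and
`1 / (N-a)! = N^(a) / N!`. Termwise differentiation is justified by computing the inner
derivative in closed form, `(μ)_a u^a (1 - u w)^(-(μ+a))`, and expanding its `b`-th derivative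
in `u` in a Taylor series at `0`, whose coefficients follow from the Leibniz rule.
-/

open Metric

/-- The components of the orthonormal basis vectors `eⁿⱼ` of `𝐀^{(λⱼ)}(𝔻)`. -/
noncomputable def eComp (m : ℕ) (lam : ℝ) (j : Fin (m + 1)) (n : ℕ)
    (ℓ : Fin (m + 1)) (z : ℂ) : ℂ :=
  if (j : ℕ) ≤ (ℓ : ℕ) ∧ (ℓ : ℕ) ≤ n + (j : ℕ) then
    ((ℓ : ℕ).choose (j : ℕ) : ℂ)
      * ((Real.sqrt n.factorial / ((n + (j : ℕ) - (ℓ : ℕ)).factorial) : ℝ) : ℂ)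
      * ((Real.sqrt ((ascPochhammer ℝ n).eval (2 * lam - m + 2 * (j : ℕ)))
          / (ascPochhammer ℝ ((ℓ : ℕ) - (j : ℕ))).eval (2 * lam - m + 2 * (j : ℕ)) : ℝ) : ℂ)
      * z ^ (n + (j : ℕ) - (ℓ : ℕ))
  else 0

open Complex Polynomial Filter Nat Topology ComplexConjugate

lemma ofReal_ascPochhammer_eval (n : ℕ) (x : ℝ) :
    (((ascPochhammer ℝ n).eval x : ℝ) : ℂ) = (ascPochhammer ℂ n).eval (x : ℂ) := by
  rw [ascPochhammer_eval₂ ofRealHom]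
  exact (eval₂_at_apply (p := ascPochhammer ℝ n) ofRealHom x).symm

lemma ascPochhammer_eval_mul_eval_add {S : Type*} [CommSemiring S] (a k : ℕ) (x : S) :
    (ascPochhammer S a).eval x * (ascPochhammer S k).eval (x + a) =
      (ascPochhammer S (a + k)).eval x := by
  simpa using congrArg (eval x) (ascPochhammer_mul (S := S) a k)

lemma descFactorial_mul_zero_pow {R : Type*} [Semiring R] (N a : ℕ) :
    (N.descFactorial a : R) * 0 ^ (N - a) = if N = a then (a ! : R) else 0 := by
  rcases lt_trichotomy N a with h | rfl | h
  · simp [descFactorial_of_lt h, h.ne]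
  · simp [descFactorial_self]
  · simp [h.ne', zero_pow (Nat.sub_ne_zero_of_lt h)]

lemma one_sub_mul_mem_slitPlane {c w : ℂ} (h : ‖c * w‖ < 1) : 1 - c * w ∈ slitPlane := by
  simpa [sub_eq_add_neg] using mem_slitPlane_of_norm_lt_one (z := -(c * w)) (by simpa using h)

lemma hasDerivAt_one_sub_mul_cpow (ν c : ℂ) {w : ℂ} (h : ‖c * w‖ < 1) :
    HasDerivAt (fun u => (1 - c * u) ^ (-ν)) (ν * c * (1 - c * w) ^ (-(ν + 1))) w := by
  have hlin : HasDerivAt (fun u => 1 - c * u) (-c) w := by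
    simpa using ((hasDerivAt_id' w).const_mul c).const_sub 1
  convert hlin.cpow_const (c := -ν) (one_sub_mul_mem_slitPlane h) using 1
  ring_nf

lemma iteratedDeriv_one_sub_mul_cpow (ν c : ℂ) (a : ℕ) {w : ℂ} (h : ‖c * w‖ < 1) :
    iteratedDeriv a (fun u => (1 - c * u) ^ (-ν)) w =
      (ascPochhammer ℂ a).eval ν * c ^ a * (1 - c * w) ^ (-(ν + a)) := by
  induction a generalizing w with
  | zero => simp
  | succ a ih =>
    have hopen : IsOpen {u : ℂ | ‖c * u‖ < 1} := isOpen_lt (by fun_prop) continuous_const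
    have heq : iteratedDeriv a (fun u => (1 - c * u) ^ (-ν)) =ᶠ[𝓝 w]
        fun u => (ascPochhammer ℂ a).eval ν * c ^ a * (1 - c * u) ^ (-(ν + a)) :=
      eventually_of_mem (hopen.mem_nhds h) fun u hu => ih hu
    rw [iteratedDeriv_succ, heq.deriv_eq,
      ((hasDerivAt_one_sub_mul_cpow (ν + a) c h).const_mul _).deriv,
      ascPochhammer_succ_eval]
    push_cast
    ring_nf

lemma analyticAt_one_sub_mul_cpow (ν c : ℂ) {w : ℂ} (h : ‖c * w‖ < 1) :
    AnalyticAt ℂ (fun u => (1 - c * u) ^ (-ν)) w :=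
  AnalyticAt.cpow (by fun_prop) analyticAt_const (one_sub_mul_mem_slitPlane h)

lemma iteratedDeriv_pow_mul_zero {𝕜 : Type*} [NontriviallyNormedField 𝕜] {g : 𝕜 → 𝕜}
    (a N : ℕ) (hg : ContDiffAt 𝕜 N g 0) :
    iteratedDeriv N (fun u => u ^ a * g u) 0 = N.descFactorial a * iteratedDeriv (N - a) g 0 := by
  rw [iteratedDeriv_fun_mul (by fun_prop) hg, Finset.sum_eq_single a]
  · rw [iteratedDeriv_fun_pow_zero, if_pos rfl, descFactorial_eq_factorial_mul_choose]
    push_cast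
    ring
  · intro i _ hia
    rw [iteratedDeriv_fun_pow_zero, if_neg hia]
    simp
  · intro ha
    have hNa : N < a := by simpa [Nat.lt_succ_iff] using ha
    simp [choose_eq_zero_of_lt hNa]

lemma Complex.hasSum_iteratedDeriv_taylorSeries {f : ℂ → ℂ} {c : ℂ} {r : ℝ}
    (hf : DifferentiableOn ℂ f (ball c r)) (b : ℕ) {z : ℂ} (hz : z ∈ ball c r) :
    HasSum (fun n => (n ! : ℂ)⁻¹ • (z - c) ^ n • iteratedDeriv (n + b) f c)
      (iteratedDeriv b f z) := by
  have hb : DifferentiableOn ℂ (iteratedDeriv b f) (ball c r) := by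
    rw [iteratedDeriv_eq_iterate]
    exact ((hf.analyticOnNhd isOpen_ball).iterated_deriv b).differentiableOn
  simpa only [iteratedDeriv_eq_iterate, ← Function.iterate_add_apply] using
    hasSum_taylorSeries_on_ball hb hz

lemma iteratedDeriv_pow_mul_one_sub_mul_cpow_zero (ν c : ℂ) (a N : ℕ) :
    iteratedDeriv N (fun u => (ascPochhammer ℂ a).eval ν * u ^ a * (1 - c * u) ^ (-(ν + a))) 0
      = N.descFactorial a * (ascPochhammer ℂ N).eval ν * c ^ (N - a) := by
  have hc0 : ‖c * 0‖ < 1 := by simp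
  simp_rw [mul_assoc, iteratedDeriv_const_mul_field,
    iteratedDeriv_pow_mul_zero a N (analyticAt_one_sub_mul_cpow _ c hc0).contDiffAt,
    iteratedDeriv_one_sub_mul_cpow _ c _ hc0]
  rcases le_or_gt a N with haN | hNa
  · have hpoch := ascPochhammer_eval_mul_eval_add a (N - a) ν
    rw [Nat.add_sub_cancel' haN] at hpoch
    simp only [mul_zero, sub_zero, one_cpow, mul_one, ← hpoch]
    ring
  · simp [descFactorial_of_lt hNa]

theorem hasSum_iteratedDeriv_iteratedDeriv_one_sub_mul_cpow (ν : ℂ) (a b : ℕ) {z c : ℂ}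
    (hz : ‖z‖ < 1) (hc : ‖c‖ < 1) :
    HasSum (fun N => (ascPochhammer ℂ N).eval ν / N ! * (N.descFactorial b * z ^ (N - b))
        * (N.descFactorial a * c ^ (N - a)))
      (iteratedDeriv b (fun u => iteratedDeriv a (fun w => (1 - u * w) ^ (-ν)) c) z) := by
  set G : ℂ → ℂ := fun u => (ascPochhammer ℂ a).eval ν * u ^ a * (1 - c * u) ^ (-(ν + a))
  have hcu {u : ℂ} (hu : u ∈ ball (0 : ℂ) 1) : ‖c * u‖ < 1 := by
    rw [norm_mul]
    exact mul_lt_one_of_nonneg_of_lt_one_left (norm_nonneg c) hc (mem_ball_zero_iff.mp hu).le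
  have hG : (fun u => iteratedDeriv a (fun w => (1 - u * w) ^ (-ν)) c) =ᶠ[𝓝 z] G :=
    eventually_of_mem (isOpen_ball.mem_nhds (mem_ball_zero_iff.mpr hz)) fun u hu => by
      dsimp only
      rw [iteratedDeriv_one_sub_mul_cpow ν u a (by rw [mul_comm]; exact hcu hu), mul_comm u c]
  have hGdiff : DifferentiableOn ℂ G (ball 0 1) := fun u hu =>
    (DifferentiableAt.mul (by fun_prop)
      (analyticAt_one_sub_mul_cpow (ν + a) c (hcu hu)).differentiableAt).differentiableWithinAt
  have hTaylor := hasSum_iteratedDeriv_taylorSeries hGdiff b (mem_ball_zero_iff.mpr hz)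
  have hcoef : ∀ N, iteratedDeriv N G 0 =
      N.descFactorial a * (ascPochhammer ℂ N).eval ν * c ^ (N - a) :=
    iteratedDeriv_pow_mul_one_sub_mul_cpow_zero ν c a
  have hhead : ∑ N ∈ Finset.range b, (ascPochhammer ℂ N).eval ν / N ! *
      (N.descFactorial b * z ^ (N - b)) * (N.descFactorial a * c ^ (N - a)) = 0 :=
    Finset.sum_eq_zero fun N hN => by simp [descFactorial_of_lt (Finset.mem_range.mp hN)]
  rw [hG.iteratedDeriv_eq, ← hasSum_nat_add_iff' b, hhead, sub_zero]
  refine hTaylor.congr_fun fun n => ?_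
  have hfact : (n ! : ℂ) * (n + b).descFactorial b = (n + b) ! := by
    exact_mod_cast (Nat.add_sub_cancel n b ▸ factorial_mul_descFactorial (Nat.le_add_left b n))
  have hd : ((n + b).descFactorial b : ℂ) ≠ 0 := by
    exact_mod_cast (Nat.descFactorial_pos.mpr (Nat.le_add_left b n)).ne'
  rw [sub_zero, smul_eq_mul, smul_eq_mul, hcoef, Nat.add_sub_cancel, ← hfact]
  field_simp

section eComp

variable {m : ℕ} {lam : ℝ} {j : Fin (m + 1)}

lemma eComp_of_lt {ℓ : Fin (m + 1)} (h : (ℓ : ℕ) < j) (N : ℕ) (z : ℂ) :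
    eComp m lam j N ℓ z = 0 :=
  if_neg fun h' => h.not_ge h'.1

/-- The falling factorial vanishes exactly where the `if` in `eComp` fails. -/
lemma eComp_eq_descFactorial {ℓ : Fin (m + 1)} (h : (j : ℕ) ≤ ℓ) (N : ℕ) (z : ℂ) :
    eComp m lam j N ℓ z = ((ℓ : ℕ).choose j : ℂ)
      * (((ascPochhammer ℝ (ℓ - j)).eval (2 * lam - m + 2 * (j : ℕ)) : ℝ) : ℂ)⁻¹
      * ((Real.sqrt N ! * Real.sqrt ((ascPochhammer ℝ N).eval (2 * lam - m + 2 * (j : ℕ))) / N !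
          : ℝ) : ℂ)
      * (N.descFactorial (ℓ - j) * z ^ (N - (ℓ - j))) := by
  unfold eComp
  split_ifs with hc
  · have hinv : ((N - (ℓ - j)) ! : ℝ)⁻¹ = N.descFactorial (ℓ - j) / N ! := by
      rw [eq_div_iff (by positivity), ← factorial_mul_descFactorial (show (ℓ : ℕ) - j ≤ N by omega)]
      push_cast
      field_simp
    rw [show N + j - ℓ = N - (ℓ - j) by omega, div_eq_mul_inv (Real.sqrt _), hinv]
    push_cast
    ring
  · rw [descFactorial_of_lt (by omega)]
    simp

lemma eComp_mul_conj_eComp (hμ : 0 < 2 * lam - m + 2 * (j : ℕ)) {p ℓ : Fin (m + 1)}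
    (hp : (j : ℕ) ≤ p) (hℓ : (j : ℕ) ≤ ℓ) (N : ℕ) (z ω : ℂ) :
    eComp m lam j N p z * conj (eComp m lam j N ℓ ω) =
      ((ℓ : ℕ).choose j : ℂ) * ((p : ℕ).choose j : ℂ)
        * (((ascPochhammer ℝ (ℓ - j)).eval (2 * lam - m + 2 * (j : ℕ)) : ℝ) : ℂ)⁻¹
        * (((ascPochhammer ℝ (p - j)).eval (2 * lam - m + 2 * (j : ℕ)) : ℝ) : ℂ)⁻¹
        * ((ascPochhammer ℂ N).eval (2 * (lam : ℂ) - m + 2 * (j : ℕ)) / N !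
          * (N.descFactorial (p - j) * z ^ (N - (p - j)))
          * (N.descFactorial (ℓ - j) * conj ω ^ (N - (ℓ - j)))) := by
  set s : ℝ :=
    Real.sqrt N ! * Real.sqrt ((ascPochhammer ℝ N).eval (2 * lam - m + 2 * (j : ℕ))) / (N ! : ℝ)
  have hsR : s * s = (ascPochhammer ℝ N).eval (2 * lam - m + 2 * (j : ℕ)) / N ! := by
    have hP := (ascPochhammer_pos N _ hμ).le
    simp only [s]
    field_simp
    rw [Real.sq_sqrt (by positivity), Real.sq_sqrt hP]
  have hs : (s : ℂ) * s = (ascPochhammer ℂ N).eval (2 * (lam : ℂ) - m + 2 * (j : ℕ)) / N ! := by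
    rw [← ofReal_mul, hsR]
    push_cast [ofReal_ascPochhammer_eval]
    rfl
  rw [eComp_eq_descFactorial hp, eComp_eq_descFactorial hℓ, ← hs]
  simp only [map_mul, map_inv₀, map_natCast, map_pow, conj_ofReal]
  ring

theorem hasSum_eComp_mul_conj_eComp (hμ : 0 < 2 * lam - m + 2 * (j : ℕ)) {p ℓ : Fin (m + 1)}
    (hp : (j : ℕ) ≤ p) (hℓ : (j : ℕ) ≤ ℓ) {z ω : ℂ} (hz : ‖z‖ < 1) (hω : ‖ω‖ < 1) :
    HasSum (fun N => eComp m lam j N p z * conj (eComp m lam j N ℓ ω))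
      (((ℓ : ℕ).choose j : ℂ) * ((p : ℕ).choose j : ℂ)
        * (((ascPochhammer ℝ (ℓ - j)).eval (2 * lam - m + 2 * (j : ℕ)) : ℝ) : ℂ)⁻¹
        * (((ascPochhammer ℝ (p - j)).eval (2 * lam - m + 2 * (j : ℕ)) : ℝ) : ℂ)⁻¹
        * iteratedDeriv (p - j) (fun u => iteratedDeriv (ℓ - j)
            (fun w => (1 - u * w) ^ (-(2 * (lam : ℂ) - m + 2 * (j : ℕ)))) (conj ω)) z) := by
  simp_rw [eComp_mul_conj_eComp hμ hp hℓ]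
  exact (hasSum_iteratedDeriv_iteratedDeriv_one_sub_mul_cpow _ _ _ hz
    (by rwa [RCLike.norm_conj])).mul_left _

theorem tsum_eComp_mul_conj_eComp_zero (hμ : 0 < 2 * lam - m + 2 * (j : ℕ)) (p ℓ : Fin (m + 1)) :
    ∑' N, eComp m lam j N p 0 * conj (eComp m lam j N ℓ 0) =
      if p = ℓ then
        (if (j : ℕ) ≤ ℓ then ((ℓ : ℕ).choose j : ℂ) ^ 2 * (((ℓ : ℕ) - j) ! : ℂ)
          * (((ascPochhammer ℝ (ℓ - j)).eval (2 * lam - m + 2 * (j : ℕ)) : ℝ) : ℂ)⁻¹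
        else 0)
      else 0 := by
  by_cases hp : (j : ℕ) ≤ p
  swap
  · rcases eq_or_ne p ℓ with rfl | hpℓ
    · simp [eComp_of_lt (not_le.mp hp), hp]
    · simp [eComp_of_lt (not_le.mp hp), hpℓ]
  by_cases hℓ : (j : ℕ) ≤ ℓ
  swap
  · simp [eComp_of_lt (not_le.mp hℓ), hℓ]
  simp_rw [eComp_mul_conj_eComp hμ hp hℓ, map_zero, descFactorial_mul_zero_pow]
  rw [tsum_eq_single ((ℓ : ℕ) - j)]
  · rcases eq_or_ne p ℓ with rfl | hpℓ
    · have hP := (ascPochhammer_pos ((p : ℕ) - j) _ hμ).ne'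
      rw [show (2 * (lam : ℂ) - m + 2 * (j : ℕ)) = ((2 * lam - m + 2 * (j : ℕ) : ℝ) : ℂ) by
        push_cast; ring, ← ofReal_ascPochhammer_eval]
      simp only [if_true, hp]
      field_simp
    · have hne : (ℓ : ℕ) - j ≠ (p : ℕ) - j := fun h => hpℓ (Fin.ext (by omega))
      simp [hne, hpℓ]
  · intro N hN
    simp [hN]

end eComp

theorem kernel_of_bold_A_lambda_j_general
    (m : ℕ) (lam : ℝ) (hlam : (m : ℝ) < 2 * lam) (j : Fin (m + 1)) :
    (∀ z ∈ ball (0:ℂ) 1, ∀ ω ∈ ball (0:ℂ) 1, ∀ p ℓ : Fin (m + 1),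
      (∑' n : ℕ, eComp m lam j n p z * (starRingEnd ℂ) (eComp m lam j n ℓ ω))
        = if (j : ℕ) ≤ (ℓ : ℕ) ∧ (j : ℕ) ≤ (p : ℕ) then
            ((ℓ : ℕ).choose (j : ℕ) : ℂ) * ((p : ℕ).choose (j : ℕ) : ℂ)
              * (((ascPochhammer ℝ ((ℓ : ℕ) - (j : ℕ))).eval
                    (2 * lam - m + 2 * (j : ℕ)) : ℝ) : ℂ)⁻¹
              * (((ascPochhammer ℝ ((p : ℕ) - (j : ℕ))).eval
                    (2 * lam - m + 2 * (j : ℕ)) : ℝ) : ℂ)⁻¹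
              * iteratedDeriv ((p : ℕ) - (j : ℕ))
                  (fun u => iteratedDeriv ((ℓ : ℕ) - (j : ℕ))
                    (fun w => (1 - u * w) ^ (-(2 * (lam : ℂ) - m + 2 * (j : ℕ))))
                    ((starRingEnd ℂ) ω)) z
          else 0)
    ∧ (∀ p ℓ : Fin (m + 1),
      (∑' n : ℕ, eComp m lam j n p 0 * (starRingEnd ℂ) (eComp m lam j n ℓ 0))
        = if p = ℓ then
            (if (j : ℕ) ≤ (ℓ : ℕ) then
              (((ℓ : ℕ).choose (j : ℕ) : ℂ)) ^ 2
                * ((((ℓ : ℕ) - (j : ℕ)).factorial : ℂ))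
                * (((ascPochhammer ℝ ((ℓ : ℕ) - (j : ℕ))).eval
                      (2 * lam - m + 2 * (j : ℕ)) : ℝ) : ℂ)⁻¹
            else 0)
          else 0) := by
  have hμ : 0 < 2 * lam - m + 2 * (j : ℕ) := by
    have : (0 : ℝ) ≤ (j : ℕ) := Nat.cast_nonneg _
    linarith
  refine ⟨fun z hz ω hω p ℓ => ?_, tsum_eComp_mul_conj_eComp_zero hμ⟩
  split_ifs with h
  · exact (hasSum_eComp_mul_conj_eComp hμ h.2 h.1 (mem_ball_zero_iff.mp hz)
      (mem_ball_zero_iff.mp hω)).tsum_eq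
  · rcases not_and_or.mp h with h | h <;> simp [eComp_of_lt (not_le.mp h)]

/-- The reproducing kernel `𝐁^{(λⱼ)}(z,ω) = Σₙ eⁿⱼ(z)·eⁿⱼ(ω)*` of
`𝐀^{(λⱼ)}(𝔻)` satisfies `𝐁^{(λⱼ)}(z,ω)_{p,ℓ} =
C(ℓ,j)·C(p,j)·(2λⱼ)_{ℓ-j}⁻¹·(2λⱼ)_{p-j}⁻¹·∂^{p-j}∂̄^{ℓ-j}(1-zω̄)^{-2λⱼ}` for
`ℓ,p ≥ j` and `0` otherwise; in particular `𝐁^{(λⱼ)}(0,0)` is diagonal with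
`(ℓ,ℓ)`-entry `C(ℓ,j)²·(ℓ-j)!/(2λⱼ)_{ℓ-j}` for `ℓ ≥ j` and `0` for `ℓ < j`. -/
theorem kernel_of_bold_A_lambda_j
    (m : ℕ) (hm : 0 < m) (lam : ℝ) (hlam : (m : ℝ) < 2 * lam) (j : Fin (m + 1)) :
    (∀ z ∈ ball (0:ℂ) 1, ∀ ω ∈ ball (0:ℂ) 1, ∀ p ℓ : Fin (m + 1),
      (∑' n : ℕ, eComp m lam j n p z * (starRingEnd ℂ) (eComp m lam j n ℓ ω))
        = if (j : ℕ) ≤ (ℓ : ℕ) ∧ (j : ℕ) ≤ (p : ℕ) then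
            ((ℓ : ℕ).choose (j : ℕ) : ℂ) * ((p : ℕ).choose (j : ℕ) : ℂ)
              * (((ascPochhammer ℝ ((ℓ : ℕ) - (j : ℕ))).eval
                    (2 * lam - m + 2 * (j : ℕ)) : ℝ) : ℂ)⁻¹
              * (((ascPochhammer ℝ ((p : ℕ) - (j : ℕ))).eval
                    (2 * lam - m + 2 * (j : ℕ)) : ℝ) : ℂ)⁻¹
              * iteratedDeriv ((p : ℕ) - (j : ℕ))
                  (fun u => iteratedDeriv ((ℓ : ℕ) - (j : ℕ))
                    (fun w => (1 - u * w) ^ (-(2 * (lam : ℂ) - m + 2 * (j : ℕ))))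
                    ((starRingEnd ℂ) ω)) z
          else 0)
    ∧ (∀ p ℓ : Fin (m + 1),
      (∑' n : ℕ, eComp m lam j n p 0 * (starRingEnd ℂ) (eComp m lam j n ℓ 0))
        = if p = ℓ then
            (if (j : ℕ) ≤ (ℓ : ℕ) then
              (((ℓ : ℕ).choose (j : ℕ) : ℂ)) ^ 2
                * ((((ℓ : ℕ) - (j : ℕ)).factorial : ℂ))
                * (((ascPochhammer ℝ ((ℓ : ℕ) - (j : ℕ))).eval
                      (2 * lam - m + 2 * (j : ℕ)) : ℝ) : ℂ)⁻¹
            else 0)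
          else 0) :=
  kernel_of_bold_A_lambda_j_general m lam hlam j
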